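/- Among all A ∈ Γ(R₁₁,…,R_kk), the matrix R_m maximizes the Bures-Wasserstein distance to the block-diagonal matrix R₀ = diag(R₁₁,…,R_kk): d_W(A, R₀) ≤ d_W(R_m, R₀). -/

import Mathlib

open Matrix

/-- The positive semidefinite square root `A^{1/2}` of a matrix
(junk value `0` if `A` is not positive semidefinite). -/
noncomputable def msqrt {n : Type*} [Fintype n] [DecidableEq n]
    (A : Matrix n n ℝ) : Matrix n n ℝ := by
  classical exact if h : A.PosSemidef then
    (h.1.eigenvectorUnitary.1 * diagonal (Real.sqrt ∘ h.1.eigenvalues) *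
      (star h.1.eigenvectorUnitary : Matrix n n ℝ)) else 0

/-- The squared Bures-Wasserstein distance
`d_W²(R, S) = tr R + tr S − 2 tr((R^{1/2} S R^{1/2})^{1/2})`. -/
noncomputable def dWsq {n : Type*} [Fintype n] [DecidableEq n]
    (R S : Matrix n n ℝ) : ℝ :=
  R.trace + S.trace - 2 * (msqrt (msqrt R * S * msqrt R)).trace

/-- The block matrix `R_m` with diagonal blocks `R_ii = U_ii Λ_ii U_iiᵀ` and off-diagonal
blocks `Ψ_ij = U_ii Λ_ii^{1/2} Π_ij Λ_jj^{1/2} U_jjᵀ`, where `Π_ij ∈ ℝ^{d_i × d_j}` is the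
upper-left block `(I 0)` of the identity.  Entrywise:
`(R_m)_{(i,a),(j,b)} = ∑_{r,s : r = s} U_i[a,r] √(λ_{r,i}) √(λ_{s,j}) U_j[b,s]`. -/
noncomputable def Rmax {k : ℕ} (d : Fin k → ℕ)
    (U : ∀ i, Matrix (Fin (d i)) (Fin (d i)) ℝ) (lam : ∀ i, Fin (d i) → ℝ) :
    Matrix (Σ i, Fin (d i)) (Σ i, Fin (d i)) ℝ :=
  fun p q => ∑ r : Fin (d p.1), ∑ s : Fin (d q.1),
    if (r : ℕ) = (s : ℕ) then
      U p.1 p.2 r * Real.sqrt (lam p.1 r) * Real.sqrt (lam q.1 s) * U q.1 q.2 s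
    else 0

/-- The block-diagonal matrix `R₀ = diag(R₁₁,…,R_kk)` with the same diagonal blocks as
`R_m`. -/
noncomputable def Rzero {k : ℕ} (d : Fin k → ℕ)
    (U : ∀ i, Matrix (Fin (d i)) (Fin (d i)) ℝ) (lam : ∀ i, Fin (d i) → ℝ) :
    Matrix (Σ i, Fin (d i)) (Σ i, Fin (d i)) ℝ :=
  fun p q => if p.1 = q.1 then Rmax d U lam p q else 0

/-!
Write `R₀ = C Cᵀ` with `C = diag(U_i Λ_i^{1/2})` and `F(A) = tr((A^{1/2} R₀ A^{1/2})^{1/2})`.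
Every `A ∈ Γ` has `tr A = tr R_m`, so the claim is `F(R_m) ≤ F(A)`.

For `W = A^{1/2} C` we have `A^{1/2} R₀ A^{1/2} = W Wᵀ`, while `Wᵀ W = Cᵀ A C` only sees the
diagonal blocks of `A` and has diagonal blocks `Λ_i²`: inside each block the columns of `W` are
orthogonal with norms `λ_{i,r}`. Bessel's inequality, applied twice, bounds the sum of the `m`
largest eigenvalues of `W Wᵀ` by `∑_{r<m} ν_r` with `ν_r = ∑_i λ_{i,r}²`, and the totals agree.
Since `√` is concave, this majorization gives `F(A) ≥ ∑_r √ν_r`.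

For `R_m = X Xᵀ` with `X = C Π` both `Xᵀ X` and `Xᵀ R₀ X` are diagonal, so both square roots in
`F(R_m)` are explicit and `F(R_m) = ∑_r √ν_r`.
-/

open Finset

theorem sum_range_le_sum_range_of_supergradient (f : ℝ → ℝ) {κ ν g : ℕ → ℝ} {n : ℕ}
    (hg : MonotoneOn g (Set.Iio n)) (hf : ∀ t < n, f (ν t) ≤ f (κ t) + g t * (ν t - κ t))
    (hmaj : ∀ m ≤ n, ∑ t ∈ range m, κ t ≤ ∑ t ∈ range m, ν t)
    (htot : ∑ t ∈ range n, κ t = ∑ t ∈ range n, ν t) :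
    ∑ t ∈ range n, f (ν t) ≤ ∑ t ∈ range n, f (κ t) := by
  have hgap : ∀ m ≤ n, 0 ≤ ∑ t ∈ range m, (ν t - κ t) := fun m hm => by
    rw [sum_sub_distrib]; linarith [hmaj m hm]
  have habel : ∑ t ∈ range n, g t * (ν t - κ t) ≤ 0 := by
    have := sum_range_by_parts g (fun t => ν t - κ t) n
    simp only [smul_eq_mul] at this
    rw [this, show ∑ t ∈ range n, (ν t - κ t) = 0 by rw [sum_sub_distrib]; linarith, mul_zero,
      zero_sub, neg_nonpos]
    refine sum_nonneg fun i hi => mul_nonneg ?_ (hgap _ (by simp at hi; omega))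
    simp only [mem_range] at hi
    exact sub_nonneg.2 (hg (by simp; omega) (by simp; omega) (by omega))
  calc ∑ t ∈ range n, f (ν t)
      ≤ ∑ t ∈ range n, (f (κ t) + g t * (ν t - κ t)) :=
        sum_le_sum fun t ht => hf t (mem_range.1 ht)
    _ ≤ ∑ t ∈ range n, f (κ t) := by rw [sum_add_distrib]; linarith

theorem Real.sqrt_le_sqrt_add_sub_div {a b : ℝ} (ha : 0 < a) (hb : 0 ≤ b) :
    √b ≤ √a + (b - a) / (2 * √a) := by
  have hsa : 0 < √a := Real.sqrt_pos.2 ha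
  have : √a + (b - a) / (2 * √a) - √b = (√a - √b) ^ 2 / (2 * √a) := by
    field_simp
    rw [sub_sq, Real.sq_sqrt ha.le, Real.sq_sqrt hb]
    ring
  linarith [show 0 ≤ (√a - √b) ^ 2 / (2 * √a) by positivity]

theorem sum_range_sqrt_le_of_majorized {κ ν : ℕ → ℝ} {n : ℕ} (hκ : AntitoneOn κ (Set.Iio n))
    (hκ0 : ∀ t, 0 ≤ κ t) (hν0 : ∀ t, 0 ≤ ν t)
    (hmaj : ∀ m ≤ n, ∑ t ∈ range m, κ t ≤ ∑ t ∈ range m, ν t)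
    (htot : ∑ t ∈ range n, κ t = ∑ t ∈ range n, ν t) :
    ∑ t ∈ range n, √(ν t) ≤ ∑ t ∈ range n, √(κ t) := by
  -- `√` has no finite supergradient at `0`; there any slope `C ≥ 1 / √(ν t)` works, and taking
  -- `C` above all the other slopes keeps them monotone
  set C := ∑ t ∈ range n, ((√(ν t))⁻¹ + (2 * √(κ t))⁻¹)
  have hC : ∀ t < n, (√(ν t))⁻¹ ≤ C ∧ (2 * √(κ t))⁻¹ ≤ C := fun t ht => by
    have := single_le_sum (f := fun t => (√(ν t))⁻¹ + (2 * √(κ t))⁻¹)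
      (fun t _ => by positivity) (mem_range.2 ht)
    constructor <;> linarith [show 0 ≤ (√(ν t))⁻¹ by positivity,
      show 0 ≤ (2 * √(κ t))⁻¹ by positivity]
  refine sum_range_le_sum_range_of_supergradient Real.sqrt
    (g := fun t => if κ t = 0 then C else (2 * √(κ t))⁻¹) ?_ (fun t ht => ?_) hmaj htot
  · intro a ha b hb hab
    have hba := hκ ha hb hab
    by_cases hb0 : κ b = 0
    · simp only [hb0, ite_true]
      split_ifs
      · exact le_rfl
      · exact (hC a ha).2
    · have hb0' : 0 < κ b := lt_of_le_of_ne (hκ0 b) (Ne.symm hb0)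
      simp only [hb0, ne_of_gt (hb0'.trans_le hba), ite_false]
      gcongr
  · split_ifs with h0
    · rw [h0, Real.sqrt_zero, sub_zero, zero_add]
      rcases (hν0 t).eq_or_lt with h | h
      · rw [← h, Real.sqrt_zero, mul_zero]
      · calc √(ν t) = (√(ν t))⁻¹ * ν t := by
              rw [inv_mul_eq_div, Real.div_sqrt]
          _ ≤ C * ν t := by gcongr; exact (hC t ht).1
    · rw [inv_mul_eq_div]
      exact Real.sqrt_le_sqrt_add_sub_div (lt_of_le_of_ne (hκ0 t) (Ne.symm h0)) (hν0 t)

theorem sum_mul_le_sum_filter_lt {D : ℕ} {a q : Fin D → ℝ} (ha : Antitone a)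
    (ha0 : ∀ b, 0 ≤ a b) (hq0 : ∀ b, 0 ≤ q b) (hq1 : ∀ b, q b ≤ 1) {m : ℕ} (hm : ∑ b, q b ≤ m) :
    ∑ b, a b * q b ≤ ∑ b with b.val < m, a b := by
  by_cases hmD : m < D
  · set c := a ⟨m, hmD⟩
    have hpt : ∀ b, a b * q b ≤ c * q b + if b.val < m then a b - c else 0 := fun b => by
      split_ifs with hb
      · have : c ≤ a b := ha (Fin.le_def.2 hb.le)
        nlinarith [mul_nonneg (sub_nonneg.2 this) (sub_nonneg.2 (hq1 b))]
      · have : a b ≤ c := ha (Fin.le_def.2 (not_lt.1 hb))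
        nlinarith [mul_nonneg (sub_nonneg.2 this) (hq0 b)]
    calc ∑ b, a b * q b ≤ ∑ b, (c * q b + if b.val < m then a b - c else 0) :=
          sum_le_sum fun b _ => hpt b
      _ = c * ∑ b, q b + ∑ b with b.val < m, a b - c * m := by
        rw [sum_add_distrib, ← mul_sum, ← sum_filter, sum_sub_distrib, sum_const,
          Fin.card_filter_val_lt, min_eq_right hmD.le, nsmul_eq_mul]
        ring
      _ ≤ ∑ b with b.val < m, a b := by nlinarith [ha0 ⟨m, hmD⟩]
  · rw [filter_true_of_mem fun b _ => b.isLt.trans_le (not_lt.1 hmD)]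
    exact sum_le_sum fun b _ => mul_le_of_le_one_right (ha0 b) (hq1 b)

section InnerProduct

variable {E : Type*} [NormedAddCommGroup E] [InnerProductSpace ℝ E]

theorem sum_inner_sq_div_norm_sq_le {ι : Type*} [Fintype ι] {w : ι → E}
    (hw : Pairwise fun a b => inner ℝ (w a) (w b) = 0) (x : E) :
    ∑ b, inner ℝ (w b) x ^ 2 / ‖w b‖ ^ 2 ≤ ‖x‖ ^ 2 := by
  classical
  let u : {b // w b ≠ 0} → E := fun b => ‖w b‖⁻¹ • w b
  have hu : Orthonormal ℝ u := by
    rw [orthonormal_iff_ite]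
    rintro ⟨a, ha⟩ ⟨b, hb⟩
    simp only [u, real_inner_smul_left, real_inner_smul_right, Subtype.mk.injEq]
    split_ifs with hab
    · subst hab
      rw [real_inner_self_eq_norm_sq]
      field_simp
    · rw [hw hab, mul_zero, mul_zero]
  calc ∑ b, inner ℝ (w b) x ^ 2 / ‖w b‖ ^ 2
      = ∑ b : {b // w b ≠ 0}, ‖inner ℝ (u b) x‖ ^ 2 := by
        rw [← sum_filter_of_ne (p := fun b => w b ≠ 0) fun b _ h hb => h (by simp [hb]),
          sum_subtype (p := fun b => w b ≠ 0) _ fun b => by simp]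
        refine sum_congr rfl fun b _ => ?_
        simp only [u, real_inner_smul_left, Real.norm_eq_abs, sq_abs]
        field_simp
    _ ≤ ‖x‖ ^ 2 := hu.sum_inner_products_le x

theorem sum_sum_inner_sq_le_sum_norm_sq {D : ℕ} {w : Fin D → E}
    (hw : Pairwise fun a b => inner ℝ (w a) (w b) = 0) (hanti : Antitone fun b => ‖w b‖)
    {J : Type*} {v : J → E} (hv : Orthonormal ℝ v) (s : Finset J) :
    ∑ b, ∑ j ∈ s, inner ℝ (w b) (v j) ^ 2 ≤ ∑ b with b.val < #s, ‖w b‖ ^ 2 := by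
  have hbessel : ∀ b, ∑ j ∈ s, inner ℝ (w b) (v j) ^ 2 ≤ ‖w b‖ ^ 2 := fun b => by
    simpa only [real_inner_comm, Real.norm_eq_abs, sq_abs] using hv.sum_inner_products_le (w b)
  -- `q b ≤ 1` is Bessel for `v`, and `∑ b, q b ≤ #s` is Bessel for the normalized `w b`
  set q : Fin D → ℝ := fun b => (∑ j ∈ s, inner ℝ (w b) (v j) ^ 2) / ‖w b‖ ^ 2
  have hq : ∀ b, ∑ j ∈ s, inner ℝ (w b) (v j) ^ 2 = ‖w b‖ ^ 2 * q b := fun b => by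
    rcases eq_or_ne (w b) 0 with h | h
    · simp [h]
    · simp only [q]; field_simp
  calc ∑ b, ∑ j ∈ s, inner ℝ (w b) (v j) ^ 2 = ∑ b, ‖w b‖ ^ 2 * q b :=
        sum_congr rfl fun b _ => hq b
    _ ≤ ∑ b with b.val < #s, ‖w b‖ ^ 2 := by
      refine sum_mul_le_sum_filter_lt (fun a b hab => by gcongr; exact hanti hab)
        (fun b => by positivity) (fun b => by positivity)
        (fun b => div_le_one_of_le₀ (hbessel b) (by positivity)) ?_
      calc ∑ b, q b = ∑ j ∈ s, ∑ b, inner ℝ (w b) (v j) ^ 2 / ‖w b‖ ^ 2 := by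
            simp only [q, sum_div]; exact sum_comm
        _ ≤ ∑ j ∈ s, 1 := sum_le_sum fun j _ => by
            simpa [hv.1 j] using sum_inner_sq_div_norm_sq_le hw (v j)
        _ = #s := by simp

end InnerProduct

section Msqrt

open scoped MatrixOrder

variable {n : Type*} [Fintype n] [DecidableEq n] {M : Matrix n n ℝ}

theorem msqrt_of_posSemidef (hM : M.PosSemidef) :
    msqrt M = hM.1.eigenvectorUnitary.1 * diagonal (Real.sqrt ∘ hM.1.eigenvalues) *
      (star hM.1.eigenvectorUnitary : Matrix n n ℝ) :=
  dif_pos hM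

theorem msqrt_eq_cfcSqrt (hM : M.PosSemidef) : msqrt M = CFC.sqrt M := by
  rw [msqrt_of_posSemidef hM, CFC.sqrt_eq_cfc, cfc_nnreal_eq_real _ M, hM.1.cfc_eq,
    IsHermitian.cfc, Unitary.conjStarAlgAut_apply]
  congr 3
  funext i
  simp [Real.coe_sqrt, max_eq_left (hM.eigenvalues_nonneg i)]

theorem posSemidef_msqrt (M : Matrix n n ℝ) : (msqrt M).PosSemidef := by
  by_cases hM : M.PosSemidef
  · rw [msqrt_eq_cfcSqrt hM]
    exact (CFC.sqrt_nonneg M).posSemidef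
  · rw [msqrt, dif_neg hM]
    exact PosSemidef.zero

theorem msqrt_mul_msqrt (hM : M.PosSemidef) : msqrt M * msqrt M = M := by
  rw [msqrt_eq_cfcSqrt hM]
  exact CFC.sqrt_mul_sqrt_self M hM.nonneg

theorem msqrt_mul_self (hM : M.PosSemidef) : msqrt (M * M) = M := by
  have hMM : (M * M).PosSemidef := by
    have := posSemidef_conjTranspose_mul_self M
    rwa [hM.1.eq] at this
  rw [msqrt_eq_cfcSqrt hMM]
  exact CFC.sqrt_mul_self M hM.nonneg

theorem trace_msqrt (hM : M.PosSemidef) : (msqrt M).trace = ∑ i, √(hM.1.eigenvalues i) := by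
  have hV : (star hM.1.eigenvectorUnitary : Matrix n n ℝ) * hM.1.eigenvectorUnitary.1 = 1 :=
    mem_unitaryGroup_iff'.1 hM.1.eigenvectorUnitary.2
  rw [msqrt_of_posSemidef hM, trace_mul_cycle, hV, one_mul, trace_diagonal]
  rfl

theorem transpose_msqrt (M : Matrix n n ℝ) : (msqrt M)ᵀ = msqrt M := by
  simpa [conjTranspose_eq_transpose_of_trivial] using (posSemidef_msqrt M).1.eq

end Msqrt

theorem Matrix.IsHermitian.eigenvalues_mul_transpose {n κ : Type*} [Fintype n] [DecidableEq n]
    [Fintype κ] {W : Matrix n κ ℝ} (hN : (W * Wᵀ).IsHermitian) (j : n) :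
    hN.eigenvalues j =
      ∑ q, inner ℝ (WithLp.toLp 2 (Wᵀ q) : EuclideanSpace ℝ n) (hN.eigenvectorBasis j) ^ 2 := by
  set v := hN.eigenvectorBasis j
  have hv : v.ofLp ⬝ᵥ v.ofLp = 1 := by
    have : inner ℝ v v = 1 := by
      rw [real_inner_self_eq_norm_sq, hN.eigenvectorBasis.orthonormal.1 j, one_pow]
    rwa [EuclideanSpace.inner_eq_star_dotProduct, star_trivial] at this
  calc hN.eigenvalues j = v.ofLp ⬝ᵥ ((W * Wᵀ) *ᵥ v.ofLp) := by
        rw [hN.mulVec_eigenvectorBasis, dotProduct_smul, hv, smul_eq_mul, mul_one]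
    _ = (Wᵀ *ᵥ v.ofLp) ⬝ᵥ (Wᵀ *ᵥ v.ofLp) := by
        rw [← mulVec_mulVec, dotProduct_mulVec, ← mulVec_transpose]
    _ = _ := by
        simp only [dotProduct, EuclideanSpace.inner_eq_star_dotProduct, star_trivial, sq]
        refine sum_congr rfl fun q _ => ?_
        simp [mulVec, dotProduct, mul_comm]

theorem sum_eigenvalues_le_of_blockDiag' {n ι : Type*} [Fintype n] [DecidableEq n] [Fintype ι]
    {d : ι → ℕ} {W : Matrix n (Σ i, Fin (d i)) ℝ} (hN : (W * Wᵀ).IsHermitian)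
    {σ : ∀ i, Fin (d i) → ℝ} (hσ0 : ∀ i a, 0 ≤ σ i a) (hσ : ∀ i, Antitone (σ i))
    (hW : ∀ i, blockDiag' (Wᵀ * W) i = diagonal fun a => σ i a ^ 2) (s : Finset n) :
    ∑ j ∈ s, hN.eigenvalues j ≤ ∑ q : Σ i, Fin (d i) with q.2.val < #s, σ q.1 q.2 ^ 2 := by
  let col : (Σ i, Fin (d i)) → EuclideanSpace ℝ n := fun q => WithLp.toLp 2 (Wᵀ q)
  have hinner : ∀ i a b, inner ℝ (col ⟨i, a⟩) (col ⟨i, b⟩) = if a = b then σ i a ^ 2 else 0 :=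
    fun i a b => by
      have := congrFun (congrFun (hW i) a) b
      rw [blockDiag'_apply, mul_apply, diagonal_apply] at this
      simp [← this, col, EuclideanSpace.inner_eq_star_dotProduct, dotProduct, mul_comm]
  have hnorm : ∀ i a, ‖col ⟨i, a⟩‖ = σ i a := fun i a => by
    rw [norm_eq_sqrt_real_inner, hinner, if_pos rfl, Real.sqrt_sq (hσ0 i a)]
  calc ∑ j ∈ s, hN.eigenvalues j
      = ∑ i, ∑ a, ∑ j ∈ s, inner ℝ (col ⟨i, a⟩) (hN.eigenvectorBasis j) ^ 2 := by
        simp only [hN.eigenvalues_mul_transpose]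
        rw [sum_comm, Fintype.sum_sigma]
    _ ≤ ∑ i, ∑ a with a.val < #s, σ i a ^ 2 := by
        refine sum_le_sum fun i _ => ?_
        simp only [← hnorm i]
        refine sum_sum_inner_sq_le_sum_norm_sq (fun a b hab => (hinner i a b).trans (if_neg hab))
          ?_ hN.eigenvectorBasis.orthonormal s
        simpa only [hnorm] using hσ i
    _ = ∑ q : Σ i, Fin (d i) with q.2.val < #s, σ q.1 q.2 ^ 2 := by
        rw [sum_filter, Fintype.sum_sigma]
        simp only [sum_filter]

theorem sum_sqrt_le_trace_msqrt {n : Type*} [Fintype n] [DecidableEq n] {M : Matrix n n ℝ}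
    (hM : M.PosSemidef) {ν : ℕ → ℝ} (hν : ∀ r, 0 ≤ ν r)
    (hmaj : ∀ s : Finset n, ∑ j ∈ s, hM.1.eigenvalues j ≤ ∑ r ∈ range #s, ν r)
    (htot : M.trace = ∑ r ∈ range (Fintype.card n), ν r) :
    ∑ r ∈ range (Fintype.card n), √(ν r) ≤ (msqrt M).trace := by
  set N := Fintype.card n
  let e : Fin N ≃ n := Fintype.equivOfCardEq (Fintype.card_fin N)
  let κ : ℕ → ℝ := fun t => if h : t < N then hM.1.eigenvalues₀ ⟨t, h⟩ else 0
  have hκ : ∀ t : Fin N, κ t = hM.1.eigenvalues (e t) := fun t => by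
    simp [κ, IsHermitian.eigenvalues, e]
  have hsum : ∀ f : ℝ → ℝ, ∑ i, f (hM.1.eigenvalues i) = ∑ t ∈ range N, f (κ t) := fun f => by
    rw [← Fin.sum_univ_eq_sum_range, ← e.sum_comp]
    simp only [hκ]
  have hκ0 : ∀ t, 0 ≤ κ t := fun t => by
    by_cases h : t < N
    · simpa only [← hκ ⟨t, h⟩] using hM.eigenvalues_nonneg (e ⟨t, h⟩)
    · simp [κ, h]
  have hanti : AntitoneOn κ (Set.Iio N) := fun a ha b hb hab => by
    simp only [κ, dif_pos (Set.mem_Iio.1 ha), dif_pos (Set.mem_Iio.1 hb)]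
    exact hM.1.eigenvalues₀_antitone (Fin.mk_le_mk.2 hab)
  have htop : ∀ m ≤ N, ∑ t ∈ range m, κ t ≤ ∑ t ∈ range m, ν t := fun m hm => by
    let s : Finset n := univ.map ((Fin.castLEEmb hm).trans e.toEmbedding)
    have hs : #s = m := by simp [s]
    calc ∑ t ∈ range m, κ t = ∑ j ∈ s, hM.1.eigenvalues j := by
          rw [← Fin.sum_univ_eq_sum_range, sum_map]
          refine sum_congr rfl fun t _ => ?_
          simpa using hκ (Fin.castLE hm t)
      _ ≤ ∑ t ∈ range m, ν t := hs ▸ hmaj s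
  have htot' : ∑ t ∈ range N, κ t = ∑ t ∈ range N, ν t := by
    rw [← htot, hM.1.trace_eq_sum_eigenvalues]
    exact (hsum id).symm
  rw [trace_msqrt hM, hsum]
  exact sum_range_sqrt_le_of_majorized hanti hκ0 hν htop htot'

section Gram

variable {m n : Type*} [Fintype m] [Fintype n] [DecidableEq n]

theorem mul_diagonal_mul_transpose_mul_mul {X : Matrix m n ℝ} {B : Matrix m m ℝ} {ν : n → ℝ}
    (hXB : Xᵀ * B * X = diagonal ν) (D D' : n → ℝ) :
    X * diagonal D * Xᵀ * B * (X * diagonal D' * Xᵀ) =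
      X * diagonal (fun r => D r * ν r * D' r) * Xᵀ := by
  calc X * diagonal D * Xᵀ * B * (X * diagonal D' * Xᵀ)
      = X * (diagonal D * (Xᵀ * B * X) * diagonal D') * Xᵀ := by simp only [Matrix.mul_assoc]
    _ = _ := by rw [hXB, diagonal_mul_diagonal, diagonal_mul_diagonal]

theorem posSemidef_mul_diagonal_mul_transpose (X : Matrix m n ℝ) {D : n → ℝ}
    (hD : ∀ r, 0 ≤ D r) :
    (X * diagonal D * Xᵀ).PosSemidef := by
  simpa [conjTranspose_eq_transpose_of_trivial] using
    (PosSemidef.diagonal hD).mul_mul_conjTranspose_same X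

theorem trace_msqrt_msqrt_mul_mul_msqrt_of_gram [DecidableEq m] (X : Matrix m n ℝ)
    (B : Matrix m m ℝ) {μ ν : n → ℝ} (hν : ∀ r, 0 ≤ ν r) (hX : Xᵀ * X = diagonal μ)
    (hXB : Xᵀ * B * X = diagonal ν) :
    (msqrt (msqrt (X * Xᵀ) * B * msqrt (X * Xᵀ))).trace = ∑ r, √(ν r) := by
  have hμ : ∀ r, μ r = ∑ p, X p r * X p r := fun r => by
    rw [← diagonal_apply_eq μ r, ← hX, mul_apply]; rfl
  have hμ0 : ∀ r, 0 ≤ μ r := fun r => (hμ r).symm ▸ sum_nonneg fun p _ => mul_self_nonneg _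
  -- the columns with `μ r = 0` vanish, so the junk values `0⁻¹ = 0` below are harmless
  have hcol : ∀ r, μ r = 0 → ∀ p, X p r = 0 := fun r h p => by
    rw [hμ, sum_eq_zero_iff_of_nonneg fun p _ => mul_self_nonneg _] at h
    exact mul_self_eq_zero.1 (h p (mem_univ p))
  have hνμ : ∀ r, μ r = 0 → ν r = 0 := fun r h => by
    rw [← diagonal_apply_eq ν r, ← hXB, mul_apply]
    exact sum_eq_zero fun p _ => by rw [hcol r h p, mul_zero]
  have hXX : Xᵀ * (1 : Matrix m m ℝ) * X = diagonal μ := by rw [Matrix.mul_one, hX]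
  have hS : msqrt (X * Xᵀ) = X * diagonal (fun r => (√(μ r))⁻¹) * Xᵀ := by
    have hSS : X * diagonal (fun r => (√(μ r))⁻¹) * Xᵀ * 1 *
        (X * diagonal (fun r => (√(μ r))⁻¹) * Xᵀ) = X * Xᵀ := by
      rw [mul_diagonal_mul_transpose_mul_mul hXX]
      congr 1
      ext p r
      rw [mul_diagonal]
      rcases (hμ0 r).eq_or_lt with h | h
      · simp [← h, hcol r h.symm p]
      · have hs := Real.sq_sqrt (hμ0 r)
        field_simp
        rw [hs]
    rw [← hSS, Matrix.mul_one,
      msqrt_mul_self (posSemidef_mul_diagonal_mul_transpose X fun r => by positivity)]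
  have hT : msqrt (msqrt (X * Xᵀ) * B * msqrt (X * Xᵀ)) =
      X * diagonal (fun r => √(ν r) / μ r) * Xᵀ := by
    have hTT : X * diagonal (fun r => √(ν r) / μ r) * Xᵀ * 1 *
        (X * diagonal (fun r => √(ν r) / μ r) * Xᵀ) = msqrt (X * Xᵀ) * B * msqrt (X * Xᵀ) := by
      rw [hS, mul_diagonal_mul_transpose_mul_mul hXB, mul_diagonal_mul_transpose_mul_mul hXX]
      congr 3
      funext r
      rcases (hμ0 r).eq_or_lt with h | h
      · simp [← h]
      · have hs := Real.sq_sqrt (hμ0 r)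
        have hs' := Real.sq_sqrt (hν r)
        field_simp
        rw [hs, hs', mul_comm]
    rw [← hTT, Matrix.mul_one, msqrt_mul_self (posSemidef_mul_diagonal_mul_transpose X fun r =>
      div_nonneg (Real.sqrt_nonneg _) (hμ0 r))]
  rw [hT, trace_mul_cycle, hX, diagonal_mul_diagonal, trace_diagonal]
  refine sum_congr rfl fun r _ => ?_
  rcases eq_or_ne (μ r) 0 with h | h
  · simp [h, hνμ r h]
  · field_simp

end Gram

section BlockDiagonal

theorem trace_eq_sum_trace_blockDiag' {o R : Type*} [Fintype o] {m' : o → Type*}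
    [∀ i, Fintype (m' i)] [AddCommMonoid R] (A : Matrix (Σ i, m' i) (Σ i, m' i) R) :
    A.trace = ∑ i, (blockDiag' A i).trace :=
  Fintype.sum_sigma _

variable {o p α : Type*} {m' n' : o → Type*} [Fintype o] [DecidableEq o]
  [NonUnitalNonAssocSemiring α]

theorem blockDiagonal'_mul_apply [∀ i, Fintype (n' i)] (M : ∀ i, Matrix (m' i) (n' i) α)
    (B : Matrix (Σ i, n' i) p α) (i : o) (a : m' i) (q : p) :
    (blockDiagonal' M * B) ⟨i, a⟩ q = ∑ b, M i a b * B ⟨i, b⟩ q := by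
  rw [mul_apply, Fintype.sum_sigma, Fintype.sum_eq_single i fun j hj =>
    sum_eq_zero fun b _ => by rw [blockDiagonal'_apply_ne _ _ _ hj.symm, zero_mul]]
  simp

theorem mul_blockDiagonal'_apply [∀ i, Fintype (m' i)] (B : Matrix p (Σ i, m' i) α)
    (M : ∀ i, Matrix (m' i) (n' i) α) (q : p) (j : o) (b : n' j) :
    (B * blockDiagonal' M) q ⟨j, b⟩ = ∑ a, B q ⟨j, a⟩ * M j a b := by
  rw [mul_apply, Fintype.sum_sigma, Fintype.sum_eq_single j fun i hi =>
    sum_eq_zero fun a _ => by rw [blockDiagonal'_apply_ne _ _ _ hi, mul_zero]]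
  simp

theorem blockDiag'_blockDiagonal'_mul_mul_blockDiagonal' {l' r' : o → Type*}
    [∀ i, Fintype (m' i)] [∀ i, Fintype (n' i)]
    (M : ∀ i, Matrix (l' i) (m' i) α) (A : Matrix (Σ i, m' i) (Σ i, n' i) α)
    (M' : ∀ i, Matrix (n' i) (r' i) α) (i : o) :
    blockDiag' (blockDiagonal' M * A * blockDiagonal' M') i = M i * blockDiag' A i * M' i := by
  ext a b
  simp only [blockDiag'_apply, mul_blockDiagonal'_apply, blockDiagonal'_mul_apply]
  simp only [mul_apply, blockDiag'_apply]

end BlockDiagonal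

section LevelMatrix

variable {ι : Type*} {d : ι → ℕ}

-- The paper's `Π`: `Π Πᵀ` has the blocks `Π_ij = (I 0)`, whence `R_m = C Π Πᵀ Cᵀ`.
def levelMatrix (d : ι → ℕ) (N : ℕ) : Matrix (Σ i, Fin (d i)) (Fin N) ℝ :=
  of fun q t => if q.2.val = t.val then 1 else 0

noncomputable def levelSum [Fintype ι] (f : (Σ i, Fin (d i)) → ℝ) (r : ℕ) : ℝ :=
  ∑ q : Σ i, Fin (d i) with q.2.val = r, f q

theorem levelMatrix_mul_transpose {N : ℕ} (hN : ∀ i, d i ≤ N) :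
    levelMatrix d N * (levelMatrix d N)ᵀ = of fun q q' => if q.2.val = q'.2.val then 1 else 0 := by
  ext q q'
  rw [mul_apply, of_apply, sum_eq_single ⟨q.2.val, q.2.isLt.trans_le (hN q.1)⟩]
  · simp [levelMatrix, eq_comm]
  · intro t _ ht
    simp only [levelMatrix, transpose_apply, of_apply]
    rw [if_neg fun h => ht (Fin.ext h.symm), zero_mul]
  · simp

theorem transpose_levelMatrix_mul_diagonal_mul [Fintype ι] [DecidableEq ι] (N : ℕ)
    (f : (Σ i, Fin (d i)) → ℝ) :
    (levelMatrix d N)ᵀ * diagonal f * levelMatrix d N = diagonal fun r : Fin N => levelSum f r := by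
  ext r s
  rw [mul_apply, diagonal_apply, levelSum, sum_filter]
  simp only [mul_diagonal, transpose_apply, levelMatrix, of_apply]
  split_ifs with hrs
  · subst hrs
    exact sum_congr rfl fun q _ => by split_ifs <;> simp
  · exact sum_eq_zero fun q _ => by
      split_ifs with h1 h2 <;> simp_all [Fin.ext_iff]

theorem sum_range_levelSum [Fintype ι] (f : (Σ i, Fin (d i)) → ℝ) (m : ℕ) :
    ∑ r ∈ range m, levelSum f r = ∑ q : Σ i, Fin (d i) with q.2.val < m, f q := by
  rw [← sum_fiberwise_of_maps_to (g := fun q : Σ i, Fin (d i) => q.2.val) (t := range m)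
    fun q hq => mem_range.2 (mem_filter.1 hq).2]
  refine sum_congr rfl fun r hr => ?_
  rw [levelSum, filter_filter]
  congr 1
  ext q
  simp only [mem_filter, mem_univ, true_and]
  exact ⟨fun h => ⟨h ▸ mem_range.1 hr, h⟩, And.right⟩

end LevelMatrix

section Model

variable {k : ℕ} {d : Fin k → ℕ} (U : ∀ i, Matrix (Fin (d i)) (Fin (d i)) ℝ)
  (lam : ∀ i, Fin (d i) → ℝ)

noncomputable def Rblock (i : Fin k) : Matrix (Fin (d i)) (Fin (d i)) ℝ :=
  U i * diagonal fun a => √(lam i a)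

noncomputable def Rfactor : Matrix (Σ i, Fin (d i)) (Σ i, Fin (d i)) ℝ :=
  blockDiagonal' (Rblock U lam)

theorem blockDiag'_Rmax (i : Fin k) :
    blockDiag' (Rmax d U lam) i = Rblock U lam i * (Rblock U lam i)ᵀ := by
  ext a b
  simp only [blockDiag'_apply, Rmax, Fin.val_inj, sum_ite_eq, mem_univ, if_true]
  rw [mul_apply]
  simp only [Rblock, transpose_apply, mul_diagonal]
  exact sum_congr rfl fun r _ => by ring

theorem Rzero_eq_Rfactor_mul_transpose : Rzero d U lam = Rfactor U lam * (Rfactor U lam)ᵀ := by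
  rw [Rfactor, blockDiagonal'_transpose, ← blockDiagonal'_mul]
  ext ⟨i, a⟩ ⟨j, b⟩
  by_cases hij : i = j
  · subst hij
    rw [blockDiagonal'_apply_eq, ← blockDiag'_Rmax]
    exact if_pos rfl
  · rw [blockDiagonal'_apply_ne _ _ _ hij]
    exact if_neg hij

theorem Rmax_eq_mul_transpose {N : ℕ} (hN : ∀ i, d i ≤ N) :
    Rmax d U lam = Rfactor U lam * levelMatrix d N * (Rfactor U lam * levelMatrix d N)ᵀ := by
  rw [transpose_mul, ← Matrix.mul_assoc, Matrix.mul_assoc (Rfactor U lam),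
    levelMatrix_mul_transpose hN, Rfactor, blockDiagonal'_transpose]
  ext ⟨i, a⟩ ⟨j, b⟩
  rw [mul_blockDiagonal'_apply]
  simp only [blockDiagonal'_mul_apply, Rmax, Rblock, of_apply, mul_diagonal, transpose_apply,
    sum_mul]
  conv_rhs => rw [sum_comm]
  exact sum_congr rfl fun r _ => sum_congr rfl fun s _ => by split_ifs <;> ring

theorem Rblock_transpose_mul_self (hU : ∀ i, U i * (U i)ᵀ = 1) (i : Fin k) :
    (Rblock U lam i)ᵀ * Rblock U lam i = diagonal fun a => √(lam i a) ^ 2 := by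
  rw [Rblock, transpose_mul, diagonal_transpose, Matrix.mul_assoc, ← Matrix.mul_assoc (U i)ᵀ,
    mul_eq_one_comm.1 (hU i), Matrix.one_mul, diagonal_mul_diagonal]
  simp only [sq]

theorem Rfactor_transpose_mul_self (hU : ∀ i, U i * (U i)ᵀ = 1) :
    (Rfactor U lam)ᵀ * Rfactor U lam = diagonal fun q => √(lam q.1 q.2) ^ 2 := by
  rw [Rfactor, blockDiagonal'_transpose, ← blockDiagonal'_mul]
  simp only [Rblock_transpose_mul_self U lam hU, blockDiagonal'_diagonal]

theorem blockDiag'_Rfactor_transpose_mul_mul (hU : ∀ i, U i * (U i)ᵀ = 1)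
    {A : Matrix (Σ i, Fin (d i)) (Σ i, Fin (d i)) ℝ} (hA : blockDiag' A = blockDiag' (Rmax d U lam))
    (i : Fin k) :
    blockDiag' ((Rfactor U lam)ᵀ * A * Rfactor U lam) i =
      diagonal fun a => (√(lam i a) ^ 2) ^ 2 := by
  rw [Rfactor, blockDiagonal'_transpose, blockDiag'_blockDiagonal'_mul_mul_blockDiagonal', hA,
    blockDiag'_Rmax]
  calc (Rblock U lam i)ᵀ * (Rblock U lam i * (Rblock U lam i)ᵀ) * Rblock U lam i
      = ((Rblock U lam i)ᵀ * Rblock U lam i) * ((Rblock U lam i)ᵀ * Rblock U lam i) := by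
        simp only [Matrix.mul_assoc]
    _ = _ := by rw [Rblock_transpose_mul_self U lam hU, diagonal_mul_diagonal]; simp only [sq]


theorem le_card_sigma (i : Fin k) : d i ≤ Fintype.card (Σ i, Fin (d i)) := by
  simpa using Fintype.card_le_of_injective (Sigma.mk (β := fun i => Fin (d i)) i)
    sigma_mk_injective

theorem trace_msqrt_Rmax (hU : ∀ i, U i * (U i)ᵀ = 1) :
    (msqrt (msqrt (Rmax d U lam) * Rzero d U lam * msqrt (Rmax d U lam))).trace =
      ∑ r ∈ range (Fintype.card (Σ i, Fin (d i))),
        √(levelSum (fun q => (√(lam q.1 q.2) ^ 2) ^ 2) r) := by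
  set N := Fintype.card (Σ i, Fin (d i))
  set X := Rfactor U lam * levelMatrix d N
  have hX : Xᵀ * X = diagonal fun r : Fin N => levelSum (fun q => √(lam q.1 q.2) ^ 2) r := by
    rw [transpose_mul, Matrix.mul_assoc, ← Matrix.mul_assoc (Rfactor U lam)ᵀ,
      Rfactor_transpose_mul_self U lam hU, ← Matrix.mul_assoc,
      transpose_levelMatrix_mul_diagonal_mul]
  have hXR : Xᵀ * Rzero d U lam * X =
      diagonal fun r : Fin N => levelSum (fun q => (√(lam q.1 q.2) ^ 2) ^ 2) r := by
    rw [Rzero_eq_Rfactor_mul_transpose, transpose_mul]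
    calc (levelMatrix d N)ᵀ * (Rfactor U lam)ᵀ * (Rfactor U lam * (Rfactor U lam)ᵀ) * X
        = (levelMatrix d N)ᵀ * ((Rfactor U lam)ᵀ * Rfactor U lam) *
            ((Rfactor U lam)ᵀ * Rfactor U lam) * levelMatrix d N := by
          simp only [X, Matrix.mul_assoc]
      _ = _ := by
          rw [Rfactor_transpose_mul_self U lam hU, Matrix.mul_assoc (levelMatrix d N)ᵀ,
            diagonal_mul_diagonal, transpose_levelMatrix_mul_diagonal_mul]
          simp only [sq]
  rw [Rmax_eq_mul_transpose U lam le_card_sigma, trace_msqrt_msqrt_mul_mul_msqrt_of_gram X _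
    (fun r => sum_nonneg fun q _ => by positivity) hX hXR]
  exact Fin.sum_univ_eq_sum_range
    (fun r => √(levelSum (fun q => (√(lam q.1 q.2) ^ 2) ^ 2) r)) N

theorem sum_sqrt_levelSum_le_trace_msqrt (hU : ∀ i, U i * (U i)ᵀ = 1)
    (hdec : ∀ i, Antitone (lam i)) {A : Matrix (Σ i, Fin (d i)) (Σ i, Fin (d i)) ℝ}
    (hA : A.PosSemidef) (hblocks : blockDiag' A = blockDiag' (Rmax d U lam)) :
    ∑ r ∈ range (Fintype.card (Σ i, Fin (d i))),
        √(levelSum (fun q => (√(lam q.1 q.2) ^ 2) ^ 2) r) ≤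
      (msqrt (msqrt A * Rzero d U lam * msqrt A)).trace := by
  set W := msqrt A * Rfactor U lam
  have hWWt : msqrt A * Rzero d U lam * msqrt A = W * Wᵀ := by
    rw [Rzero_eq_Rfactor_mul_transpose, transpose_mul, transpose_msqrt]
    simp only [W, Matrix.mul_assoc]
  have hWtW : ∀ i, blockDiag' (Wᵀ * W) i = diagonal fun a => (√(lam i a) ^ 2) ^ 2 := by
    have : Wᵀ * W = (Rfactor U lam)ᵀ * A * Rfactor U lam := by
      rw [transpose_mul, transpose_msqrt, Matrix.mul_assoc, ← Matrix.mul_assoc (msqrt A),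
        msqrt_mul_msqrt hA, Matrix.mul_assoc]
    rw [this]
    exact blockDiag'_Rfactor_transpose_mul_mul U lam hU hblocks
  have hpsd : (W * Wᵀ).PosSemidef := by
    simpa [conjTranspose_eq_transpose_of_trivial] using posSemidef_self_mul_conjTranspose W
  rw [hWWt]
  refine sum_sqrt_le_trace_msqrt hpsd (fun r => sum_nonneg fun q _ => by positivity)
    (fun s => ?_) ?_
  · rw [sum_range_levelSum]
    exact sum_eigenvalues_le_of_blockDiag' hpsd.1 (fun i a => by positivity)
      (fun i a b hab => pow_le_pow_left₀ (Real.sqrt_nonneg _)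
        (Real.sqrt_le_sqrt (hdec i hab)) 2) hWtW s
  · rw [sum_range_levelSum, filter_true_of_mem fun q _ => q.2.isLt.trans_le (le_card_sigma q.1),
      trace_mul_comm, trace_eq_sum_trace_blockDiag', Fintype.sum_sigma]
    simp only [hWtW, trace_diagonal]

end Model

theorem dW_le_dW_Rmax_Rzero_general {k : ℕ} (d : Fin k → ℕ)
    (U : ∀ i, Matrix (Fin (d i)) (Fin (d i)) ℝ)
    (hU : ∀ i, U i * (U i)ᵀ = 1)
    (lam : ∀ i, Fin (d i) → ℝ)
    (hdec : ∀ i, ∀ r s : Fin (d i), r ≤ s → lam i s ≤ lam i r)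
    (A : Matrix (Σ i, Fin (d i)) (Σ i, Fin (d i)) ℝ) (hA : A.PosSemidef)
    (hblocks : ∀ i (a b : Fin (d i)), A ⟨i, a⟩ ⟨i, b⟩ = Rmax d U lam ⟨i, a⟩ ⟨i, b⟩) :
    Real.sqrt (dWsq A (Rzero d U lam)) ≤
      Real.sqrt (dWsq (Rmax d U lam) (Rzero d U lam)) := by
  have hblocks' : blockDiag' A = blockDiag' (Rmax d U lam) := funext fun i => ext (hblocks i)
  have htrace : A.trace = (Rmax d U lam).trace := by
    rw [trace_eq_sum_trace_blockDiag', trace_eq_sum_trace_blockDiag', hblocks']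
  have hRmax := trace_msqrt_Rmax U lam hU
  have hA' := sum_sqrt_levelSum_le_trace_msqrt U lam hU (fun i a b => hdec i a b) hA hblocks'
  refine Real.sqrt_le_sqrt ?_
  rw [dWsq, dWsq, htrace]
  linarith

/-- Among all `A ∈ Γ(R₁₁,…,R_kk)` (PSD matrices with prescribed diagonal blocks), the
matrix `R_m` maximizes the Bures-Wasserstein distance to `R₀ = diag(R₁₁,…,R_kk)`:
`d_W(A, R₀) ≤ d_W(R_m, R₀)`. -/
theorem dW_le_dW_Rmax_Rzero {k : ℕ} (d : Fin k → ℕ) (hd : Monotone d)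
    (U : ∀ i, Matrix (Fin (d i)) (Fin (d i)) ℝ)
    (hU : ∀ i, U i * (U i)ᵀ = 1)
    (lam : ∀ i, Fin (d i) → ℝ) (hpos : ∀ i j, 0 ≤ lam i j)
    (hdec : ∀ i, ∀ r s : Fin (d i), r ≤ s → lam i s ≤ lam i r)
    (A : Matrix (Σ i, Fin (d i)) (Σ i, Fin (d i)) ℝ) (hA : A.PosSemidef)
    (hblocks : ∀ i (a b : Fin (d i)), A ⟨i, a⟩ ⟨i, b⟩ = Rmax d U lam ⟨i, a⟩ ⟨i, b⟩) :
    Real.sqrt (dWsq A (Rzero d U lam)) ≤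
      Real.sqrt (dWsq (Rmax d U lam) (Rzero d U lam)) :=
  dW_le_dW_Rmax_Rzero_general d U hU lam hdec A hA hblocks
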